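/- Define d₂₂(r) = 4 − 3r for 0 ≤ r ≤ 1 and d₂₂(r) = 2 − r for 1 ≤ r ≤ 2, and for a ∈ (0,1] define d_IA(a,r) = min( min(2/(a+3), 1/(4a))·(6 − 3r − 2a), min(4/(a+3), 1/(4a))·(6 − 6r + 2a), d₂₂(r) ). Then for every r with 1 ≤ r ≤ 4/3, the supremum of d_IA(a,r) over a ∈ (0,1] equals (4 − 3r)/(2r), and it is attained at a = 3r/4. -/
import Mathlib


noncomputable def d22 (r : ℝ) : ℝ := if r ≤ 1 then 4 - 3 * r else 2 - r

noncomputable def dIA (a r : ℝ) : ℝ :=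
  min (min (2 / (a + 3)) (1 / (4 * a)) * (6 - 3 * r - 2 * a))
    (min (min (4 / (a + 3)) (1 / (4 * a)) * (6 - 6 * r + 2 * a)) (d22 r))

theorem stmt_16 (r : ℝ) (hr1 : 1 ≤ r) (hr2 : r ≤ 4 / 3) :
    IsGreatest {v : ℝ | ∃ a : ℝ, 0 < a ∧ a ≤ 1 ∧ v = dIA a r} ((4 - 3 * r) / (2 * r)) ∧
    dIA (3 * r / 4) r = (4 - 3 * r) / (2 * r) := by
  have hr0 : (0 : ℝ) < r := by linarith
  have hX0 : (0 : ℝ) ≤ (4 - 3 * r) / (2 * r) :=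
    div_nonneg (by linarith) (by linarith)
  -- value at a = 3r/4
  have key : dIA (3 * r / 4) r = (4 - 3 * r) / (2 * r) := by
    unfold dIA
    have ha3 : (0 : ℝ) < 3 * r / 4 + 3 := by linarith
    have h4a : 4 * (3 * r / 4) = 3 * r := by ring
    rw [h4a]
    have hm1 : min (2 / (3 * r / 4 + 3)) (1 / (3 * r)) = 1 / (3 * r) := by
      apply min_eq_right
      rw [div_le_div_iff₀ (by linarith) ha3]
      nlinarith
    have hm2 : min (4 / (3 * r / 4 + 3)) (1 / (3 * r)) = 1 / (3 * r) := by
      apply min_eq_right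
      rw [div_le_div_iff₀ (by linarith) ha3]
      nlinarith
    rw [hm1, hm2]
    have hp1 : 1 / (3 * r) * (6 - 3 * r - 2 * (3 * r / 4)) = (4 - 3 * r) / (2 * r) := by
      field_simp; ring
    have hp2 : 1 / (3 * r) * (6 - 6 * r + 2 * (3 * r / 4)) = (4 - 3 * r) / (2 * r) := by
      field_simp; ring
    rw [hp1, hp2]
    have hXd : (4 - 3 * r) / (2 * r) ≤ d22 r := by
      unfold d22
      split_ifs with h
      · rw [div_le_iff₀ (by linarith)]; nlinarith
      · rw [div_le_iff₀ (by linarith)]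
        nlinarith [mul_nonneg (by linarith : (0:ℝ) ≤ r - 1) (by linarith : (0:ℝ) ≤ 4/3 - r)]
    rw [min_eq_left hXd, min_self]
  refine ⟨⟨⟨3 * r / 4, by linarith, by linarith, key.symm⟩, ?_⟩, key⟩
  rintro v ⟨a, ha0, ha1, rfl⟩
  have ha3 : (0 : ℝ) < a + 3 := by linarith
  have h4a : (0 : ℝ) < 4 * a := by linarith
  by_cases hA : 3 * r / 4 ≤ a
  · -- use first term
    calc dIA a r ≤ min (2 / (a + 3)) (1 / (4 * a)) * (6 - 3 * r - 2 * a) := min_le_left _ _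
      _ ≤ 1 / (4 * a) * (6 - 3 * r - 2 * a) :=
          mul_le_mul_of_nonneg_right (min_le_right _ _) (by linarith)
      _ ≤ (4 - 3 * r) / (2 * r) := by
          rw [one_div, ← div_eq_inv_mul, div_le_div_iff₀ h4a (by linarith)]
          nlinarith [mul_nonneg (by linarith : (0:ℝ) ≤ a - 3 * r / 4)
            (by linarith : (0:ℝ) ≤ 2 - r)]
  · push_neg at hA
    have h2 : dIA a r ≤ min (4 / (a + 3)) (1 / (4 * a)) * (6 - 6 * r + 2 * a) :=
      le_trans (min_le_right _ _) (min_le_left _ _)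
    by_cases hc : 0 ≤ 6 - 6 * r + 2 * a
    · calc dIA a r ≤ min (4 / (a + 3)) (1 / (4 * a)) * (6 - 6 * r + 2 * a) := h2
        _ ≤ 1 / (4 * a) * (6 - 6 * r + 2 * a) :=
            mul_le_mul_of_nonneg_right (min_le_right _ _) hc
        _ ≤ (4 - 3 * r) / (2 * r) := by
            rw [one_div, ← div_eq_inv_mul, div_le_div_iff₀ h4a (by linarith)]
            nlinarith [mul_nonneg (by linarith : (0:ℝ) ≤ 3 * r / 4 - a)
              (by linarith : (0:ℝ) ≤ r - 1)]
    · push_neg at hc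
      have hm0 : (0 : ℝ) ≤ min (4 / (a + 3)) (1 / (4 * a)) :=
        le_min (by positivity) (by positivity)
      calc dIA a r ≤ min (4 / (a + 3)) (1 / (4 * a)) * (6 - 6 * r + 2 * a) := h2
        _ ≤ 0 := mul_nonpos_of_nonneg_of_nonpos hm0 (by linarith)
        _ ≤ (4 - 3 * r) / (2 * r) := hX0
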